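/- arXiv:2205.09686 — 2 statements merged into one kernel-verified Lean document; each statement's English description precedes it below -/
import Mathlib

section
/- For every fixed integer k ≥ 1, the generating function of the Motzkin ballot numbers satisfies Σ_{n ≥ k-1} T_{n,k} x^n = (1 + x·m(x))^{k-1}·x^{k-1}, where m(x) = Σ_{n≥0} M_n x^n. -/
/-- A Dyck path of semilength `n`, encoded as a word on `Bool`
(`true` = up step `u`, `false` = down step `d`). -/
def IsDyckWord (n : ℕ) (w : List Bool) : Prop :=
  w.length = 2 * n ∧ w.count true = n ∧ w.count false = n ∧
    ∀ p : List Bool, p <+: w → p.count false ≤ p.count true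

/-- The (0-based) indices of the up steps of `w`. -/
def upIdxs (w : List Bool) : List ℕ := w.findIdxs (· == true)

/-- The (0-based) indices of the down steps of `w`. -/
def downIdxs (w : List Bool) : List ℕ := w.findIdxs (· == false)

/-- `rStat w i` is the number of `d`'s strictly between the `i`-th and the
`(i+1)`-st `u` of `w` (with `i` 1-indexed). -/
def rStat (w : List Bool) (i : ℕ) : ℕ :=
  ((w.take ((upIdxs w).getD i 0)).drop ((upIdxs w).getD (i - 1) 0 + 1)).count false

/-- `sStat w i` is the number of `u`'s strictly between the `i`-th and the
`(i+1)`-st `d` of `w` (with `i` 1-indexed). -/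
def sStat (w : List Bool) (i : ℕ) : ℕ :=
  ((w.take ((downIdxs w).getD i 0)).drop ((downIdxs w).getD (i - 1) 0 + 1)).count true

/-- The statistic `L(D) = ∏_{i=1}^{n-1} C(r_i + s_i, r_i)` of a Dyck path of semilength `n`. -/
def LStat (n : ℕ) (w : List Bool) : ℕ :=
  ∏ i ∈ Finset.Icc 1 (n - 1), Nat.choose (rStat w i + sStat w i) (rStat w i)

/-- `dyckL n k` = the set `𝒟ₙᵏ` of Dyck paths of semilength `n` with `L(D) = k`. -/
def dyckL (n k : ℕ) : Set (List Bool) := {w | IsDyckWord n w ∧ LStat n w = k}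

/-- A Motzkin path, encoded as a word on `Option Bool`
(`some true` = up, `some false` = down, `none` = horizontal). -/
def IsMotzkinWord (w : List (Option Bool)) : Prop :=
  w.count (some false) = w.count (some true) ∧
    ∀ p : List (Option Bool), p <+: w → p.count (some false) ≤ p.count (some true)

/-- `motzkin n` = the `n`-th Motzkin number `Mₙ`, the number of Motzkin paths of length `n`. -/
noncomputable def motzkin (n : ℕ) : ℕ :=
  {w : List (Option Bool) | w.length = n ∧ IsMotzkinWord w}.ncard

/-- The Motzkin ballot number `T_{n,k}`: the number of Motzkin paths of length `n`
whose first down step is in position `k` (1-indexed); by convention `T_{k-1,k} = 1`,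
counting the path of `k-1` horizontal steps. -/
noncomputable def motzkinBallot (n k : ℕ) : ℕ :=
  if n + 1 = k then 1
  else
    {w : List (Option Bool) | w.length = n ∧ IsMotzkinWord w ∧
      w.getD (k - 1) none = some false ∧ ∀ j < k - 1, w.getD j none ≠ some false}.ncard

/-- Motzkin numbers with integer index: `Mᵢ = 0` for `i < 0`. -/
noncomputable def motzkinZ (i : ℤ) : ℤ := if 0 ≤ i then (motzkin i.toNat : ℤ) else 0

/-- Motzkin ballot numbers with integer first index: `T_{n,k} = 0` for `n < 0`. -/
noncomputable def motzkinBallotZ (n : ℤ) (k : ℕ) : ℤ :=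
  if 0 ≤ n then (motzkinBallot n.toNat k : ℤ) else 0

/-- The set of returns of a Dyck path `w` of semilength `n`:
indices `1 ≤ k ≤ n` such that the path touches the `x`-axis after `2k` steps. -/
def returns (n : ℕ) (w : List Bool) : Finset ℕ :=
  (Finset.Icc 1 n).filter fun k => (w.take (2 * k)).count false = (w.take (2 * k)).count true

/-- `dyckRS n r s` = the set `𝒟ₙ^{r,s}` of Dyck paths of semilength `n` having exactly one
index `i` with `rᵢ > 0` and `sᵢ > 0`, and such that at that index `rᵢ = r` and `sᵢ = s`. -/
def dyckRS (n r s : ℕ) : Set (List Bool) :=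
  {w | IsDyckWord n w ∧ ∃ i ∈ Finset.Icc 1 (n - 1),
    (0 < rStat w i ∧ 0 < sStat w i) ∧ rStat w i = r ∧ sStat w i = s ∧
      ∀ j ∈ Finset.Icc 1 (n - 1), 0 < rStat w j ∧ 0 < sStat w j → j = i}

/-- `twoStars n w k₁ k₂` says that `k₁ < k₂` are exactly the two indices `i` of `w`
with `rᵢ > 0` and `sᵢ > 0`. -/
def twoStars (n : ℕ) (w : List Bool) (k₁ k₂ : ℕ) : Prop :=
  k₁ ∈ Finset.Icc 1 (n - 1) ∧ k₂ ∈ Finset.Icc 1 (n - 1) ∧ k₁ < k₂ ∧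
    (0 < rStat w k₁ ∧ 0 < sStat w k₁) ∧ (0 < rStat w k₂ ∧ 0 < sStat w k₂) ∧
    ∀ j ∈ Finset.Icc 1 (n - 1), 0 < rStat w j ∧ 0 < sStat w j → j = k₁ ∨ j = k₂

/-- `xStat w k` = the number of indices `i < k` with `rᵢ = 0` and `sᵢ > 0`. -/
def xStat (w : List Bool) (k : ℕ) : ℕ :=
  ((Finset.Ico 1 k).filter fun i => rStat w i = 0 ∧ 0 < sStat w i).card

/-- `yStat w k` = the number of indices `i < k` with `rᵢ > 0` and `sᵢ = 0`. -/
def yStat (w : List Bool) (k : ℕ) : ℕ :=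
  ((Finset.Ico 1 k).filter fun i => 0 < rStat w i ∧ sStat w i = 0).card

/-- The generating function `m(x) = Σ Mₙ xⁿ` of the Motzkin numbers, over `ℚ`. -/
noncomputable def motzkinGF : PowerSeries ℚ := PowerSeries.mk fun n => (motzkin n : ℚ)

/-! Write `l = k - 1`. A path counted by `T_{n,k}` is a Motzkin word whose first down step has
(0-based) index `l`, where `List.idxOf` returns the length of a word without down steps; this
absorbs the convention `T_{k-1,k} = 1`. For `l = 0` only the empty word qualifies. Otherwise such
a word is `h w'` or, cutting at the first return to the axis, `u A d B`, where `w'` and `A` are of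
the same kind for `l - 1` and `B` is any Motzkin word. Counting by length, the series `B_l` satisfy
`B_0 = 1` and `B_l = x (1 + x m(x)) B_{l-1}`. -/

namespace List

variable {α : Type*}

theorem prefix_append_iff {p l₁ l₂ : List α} :
    p <+: l₁ ++ l₂ ↔ p <+: l₁ ∨ ∃ q, q <+: l₂ ∧ p = l₁ ++ q := by
  constructor
  · intro h
    rcases prefix_or_prefix_of_prefix h (prefix_append l₁ l₂) with hp | ⟨q, rfl⟩
    · exact Or.inl hp
    · exact Or.inr ⟨q, (prefix_append_right_inj l₁).mp h, rfl⟩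
  · rintro (hp | ⟨q, hq, rfl⟩)
    · exact prefix_append_of_prefix hp
    · exact (prefix_append_right_inj l₁).mpr hq

theorem exists_eq_append_cons_of_exists_prefix_not {P : List α → Prop} {v : List α}
    (hnil : P []) (h : ∃ p, p <+: v ∧ ¬ P p) :
    ∃ A x B, v = A ++ x :: B ∧ (∀ q, q <+: A → P q) ∧ ¬ P (A ++ [x]) := by
  induction v using List.reverseRecOn with
  | nil =>
    obtain ⟨p, hp, hPp⟩ := h
    exact absurd (prefix_nil.mp hp ▸ hnil) hPp
  | append_singleton v y ih =>
    by_cases hv : ∃ p, p <+: v ∧ ¬ P p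
    · obtain ⟨A, x, B, rfl, hA, hx⟩ := ih hv
      exact ⟨A, x, B ++ [y], by simp, hA, hx⟩
    · push Not at hv
      obtain ⟨p, hp, hPp⟩ := h
      rcases prefix_concat_iff.mp hp with rfl | hp
      · exact ⟨v, y, [], by simp, hv, hPp⟩
      · exact absurd (hv p hp) hPp

theorem idxOf_append_cons_self [BEq α] [LawfulBEq α] (A B : List α) (a : α) :
    (A ++ a :: B).idxOf a = A.idxOf a := by
  rw [idxOf_append]
  split_ifs with ha
  · rfl
  · simp [idxOf_eq_length ha]

theorem idxOf_eq_iff_getD [BEq α] [LawfulBEq α] {l : List α} {a d : α} (had : a ≠ d) {i : ℕ}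
    (hi : i ≠ l.length) : l.idxOf a = i ↔ l.getD i d = a ∧ ∀ j < i, l.getD j d ≠ a := by
  induction l generalizing i with
  | nil => simpa [Ne.symm had, eq_comm] using hi
  | cons b l ih =>
    cases i with
    | zero => by_cases hb : b = a <;> simp [hb]
    | succ i =>
      rw [length_cons, Ne, Nat.add_right_cancel_iff] at hi
      rw [getD_cons_succ, Nat.forall_lt_succ_left, getD_cons_zero]
      by_cases hb : b = a
      · simp [hb]
      · simp only [idxOf_cons, beq_eq_false_iff_ne.mpr hb, cond_false, Nat.add_right_cancel_iff,
          ih hi, getD_cons_succ, ne_eq, hb, not_false_eq_true, true_and]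

theorem prefix_concat_of_append_cons_eq {l₁ l₂ l₃ l₄ : List α} {a : α}
    (h : l₁ ++ a :: l₂ = l₃ ++ l₄) (hlt : l₁.length < l₃.length) : l₁ ++ [a] <+: l₃ := by
  refine prefix_of_prefix_length_le ?_ (prefix_append l₃ l₄) (by simpa using hlt)
  rw [← h]
  exact (prefix_append_right_inj l₁).mpr (by simp)

end List

section LengthGF

open PowerSeries Set Finset.HasAntidiagonal

variable (R : Type*) [Semiring R] {α : Type*}

noncomputable def lengthGF (S : Set (List α)) : PowerSeries R :=
  PowerSeries.mk fun n => ({w ∈ S | w.length = n}.ncard : R)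

variable {R}

theorem coeff_lengthGF (S : Set (List α)) (n : ℕ) :
    coeff n (lengthGF R S) = ({w ∈ S | w.length = n}.ncard : R) :=
  coeff_mk _ _

theorem lengthGF_singleton_nil : lengthGF R {([] : List α)} = 1 := by
  ext n
  rw [coeff_lengthGF, coeff_one]
  cases n with
  | zero => simp
  | succ n =>
    have : {w ∈ ({[]} : Set (List α)) | w.length = n + 1} = ∅ :=
      eq_empty_iff_forall_notMem.mpr fun _ ⟨hw, hlen⟩ => by simp [mem_singleton_iff.mp hw] at hlen
    rw [this, ncard_empty, Nat.cast_zero, if_neg n.succ_ne_zero]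

theorem lengthGF_image_cons (a : α) (S : Set (List α)) :
    lengthGF R ((a :: ·) '' S) = X * lengthGF R S := by
  ext n
  cases n with
  | zero =>
    have : {w ∈ (a :: ·) '' S | w.length = 0} = ∅ := by
      refine eq_empty_iff_forall_notMem.mpr ?_
      rintro _ ⟨⟨v, -, rfl⟩, hlen⟩
      simp at hlen
    rw [coeff_lengthGF, this, ncard_empty, Nat.cast_zero, coeff_zero_X_mul]
  | succ n =>
    rw [coeff_succ_X_mul, coeff_lengthGF, coeff_lengthGF]
    have : {w ∈ (a :: ·) '' S | w.length = n + 1} = (a :: ·) '' {w ∈ S | w.length = n} := by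
      ext w; constructor
      · rintro ⟨⟨v, hv, rfl⟩, hlen⟩; exact ⟨v, ⟨hv, by simpa using hlen⟩, rfl⟩
      · rintro ⟨v, ⟨hv, hlen⟩, rfl⟩; exact ⟨⟨v, hv, rfl⟩, by simpa using hlen⟩
    rw [this, ncard_image_of_injective _ List.cons_injective]

theorem finite_setOf_mem_length_eq [Finite α] (S : Set (List α)) (n : ℕ) :
    {w ∈ S | w.length = n}.Finite :=
  (List.finite_length_eq α n).subset fun _ hw => hw.2

theorem lengthGF_union [Finite α] {S T : Set (List α)} (h : Disjoint S T) :
    lengthGF R (S ∪ T) = lengthGF R S + lengthGF R T := by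
  ext n
  rw [map_add, coeff_lengthGF, coeff_lengthGF, coeff_lengthGF, ← Nat.cast_add,
    show {w ∈ S ∪ T | w.length = n} = _ from sep_union,
    ncard_union_eq (h.mono (sep_subset _ _) (sep_subset _ _)) (finite_setOf_mem_length_eq S n)
      (finite_setOf_mem_length_eq T n)]

theorem lengthGF_image2_append [Finite α] {S T : Set (List α)}
    (h : InjOn (fun p : List α × List α => p.1 ++ p.2) (S ×ˢ T)) :
    lengthGF R (image2 (· ++ ·) S T) = lengthGF R S * lengthGF R T := by
  ext n
  have himage : {w ∈ image2 (· ++ ·) S T | w.length = n} =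
      (fun p : List α × List α => p.1 ++ p.2) '' {p ∈ S ×ˢ T | p.1.length + p.2.length = n} := by
    ext w
    simp only [mem_image2, mem_image, mem_prod, Prod.exists]
    constructor
    · rintro ⟨⟨A, hA, B, hB, rfl⟩, rfl⟩; exact ⟨A, B, ⟨⟨hA, hB⟩, by simp⟩, rfl⟩
    · rintro ⟨A, B, ⟨⟨hA, hB⟩, hlen⟩, rfl⟩; exact ⟨⟨A, hA, B, hB, rfl⟩, by simpa using hlen⟩
  have hunion : {p ∈ S ×ˢ T | p.1.length + p.2.length = n} =
      ⋃ ij ∈ (antidiagonal n : Set (ℕ × ℕ)),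
        {w ∈ S | w.length = ij.1} ×ˢ {w ∈ T | w.length = ij.2} := by
    ext ⟨A, B⟩
    simp only [mem_iUnion, mem_prod, mem_sep_iff, Finset.mem_coe,
      Finset.HasAntidiagonal.mem_antidiagonal, exists_prop, Prod.exists]
    constructor
    · rintro ⟨⟨hA, hB⟩, hlen⟩
      exact ⟨_, _, hlen, ⟨hA, rfl⟩, hB, rfl⟩
    · rintro ⟨i, j, hij, ⟨hA, rfl⟩, hB, rfl⟩
      exact ⟨⟨hA, hB⟩, hij⟩
  rw [coeff_lengthGF, coeff_mul, himage, (h.mono (sep_subset _ _)).ncard_image, hunion,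
    Finite.ncard_biUnion (Finset.finite_toSet _), finsum_mem_coe_finset, Nat.cast_sum]
  · simp only [coeff_lengthGF, ncard_prod, Nat.cast_mul]
  · exact fun ij _ => (finite_setOf_mem_length_eq S _).prod (finite_setOf_mem_length_eq T _)
  · intro ij _ kl _ hne
    refine disjoint_left.mpr ?_
    rintro ⟨A, B⟩ ⟨⟨-, hA⟩, -, hB⟩ ⟨⟨-, hA'⟩, -, hB'⟩
    exact hne (Prod.ext (hA.symm.trans hA') (hB.symm.trans hB'))

end LengthGF

section Motzkin

open List

theorem isMotzkinWord_nil : IsMotzkinWord [] :=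
  ⟨rfl, fun p hp => by simp [prefix_nil.mp hp]⟩

theorem not_isMotzkinWord_cons_down (v : List (Option Bool)) :
    ¬ IsMotzkinWord (some false :: v) := fun h => by
  simpa using h.2 [some false] (cons_prefix_cons.mpr ⟨rfl, nil_prefix⟩)

theorem isMotzkinWord_cons_none_iff {v : List (Option Bool)} :
    IsMotzkinWord (none :: v) ↔ IsMotzkinWord v := by
  simp only [IsMotzkinWord, prefix_cons_iff]
  constructor
  · rintro ⟨hc, hp⟩
    refine ⟨by simpa using hc, fun p hp' => ?_⟩
    simpa using hp (none :: p) (Or.inr ⟨p, rfl, hp'⟩)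
  · rintro ⟨hc, hp⟩
    refine ⟨by simpa using hc, ?_⟩
    rintro p (rfl | ⟨q, rfl, hq⟩)
    · simp
    · simpa using hp q hq

theorem IsMotzkinWord.up_append_down {A B : List (Option Bool)} (hA : IsMotzkinWord A)
    (hB : IsMotzkinWord B) : IsMotzkinWord (some true :: (A ++ some false :: B)) := by
  refine ⟨by grind [IsMotzkinWord], fun p hp => ?_⟩
  rcases prefix_cons_iff.mp hp with rfl | ⟨q, rfl, hq⟩
  · simp
  rcases prefix_append_iff.mp hq with hqA | ⟨r, hr, rfl⟩
  · simpa using (hA.2 q hqA).trans (Nat.le_succ _)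
  rcases prefix_cons_iff.mp hr with rfl | ⟨s, rfl, hs⟩
  · simp [hA.1]
  · grind [IsMotzkinWord]

theorem IsMotzkinWord.exists_of_cons_up {v : List (Option Bool)}
    (h : IsMotzkinWord (some true :: v)) :
    ∃ A B, IsMotzkinWord A ∧ IsMotzkinWord B ∧ v = A ++ some false :: B := by
  have hcount : v.count (some false) = v.count (some true) + 1 := by simpa using h.1
  have hbound : ∀ p, p <+: v → p.count (some false) ≤ p.count (some true) + 1 := fun p hp => by
    simpa using h.2 (some true :: p) (cons_prefix_cons.mpr ⟨rfl, hp⟩)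
  obtain ⟨A, x, B, rfl, hA, hAx⟩ := exists_eq_append_cons_of_exists_prefix_not
    (P := fun q => q.count (some false) ≤ q.count (some true)) (by simp)
    ⟨v, prefix_rfl, by omega⟩
  have hAx' := hbound (A ++ [x]) ((prefix_append_right_inj A).mpr (by simp))
  have hAA := hA A prefix_rfl
  obtain rfl : x = some false := by
    rcases x with _ | _ | _ <;> grind
  refine ⟨A, B, ⟨by grind, hA⟩, ⟨by grind, fun s hs => ?_⟩, rfl⟩
  have := hbound (A ++ some false :: s)
    ((prefix_append_right_inj A).mpr (cons_prefix_cons.mpr ⟨rfl, hs⟩))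
  grind

theorem IsMotzkinWord.not_prefix_append_down {A A' : List (Option Bool)}
    (hA : IsMotzkinWord A) (hA' : IsMotzkinWord A') : ¬ A ++ [some false] <+: A' := fun hpre => by
  simpa [hA.1] using hA'.2 _ hpre

theorem IsMotzkinWord.append_down_inj {A A' B B' : List (Option Bool)} (hA : IsMotzkinWord A)
    (hA' : IsMotzkinWord A') (h : A ++ some false :: B = A' ++ some false :: B') :
    A = A' ∧ B = B' := by
  have hlen : A.length = A'.length := by
    by_contra hne
    rcases Nat.lt_or_gt_of_ne hne with hlt | hlt
    · exact hA.not_prefix_append_down hA' (prefix_concat_of_append_cons_eq h hlt)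
    · exact hA'.not_prefix_append_down hA (prefix_concat_of_append_cons_eq h.symm hlt)
  obtain ⟨rfl, hB⟩ := append_inj h hlen
  exact ⟨rfl, cons_injective hB⟩

theorem isMotzkinWord_replicate_none (n : ℕ) : IsMotzkinWord (replicate n none) := by
  induction n with
  | zero => exact isMotzkinWord_nil
  | succ n ih => exact isMotzkinWord_cons_none_iff.mpr ih

theorem IsMotzkinWord.eq_replicate_none {w : List (Option Bool)} (h : IsMotzkinWord w)
    (hd : some false ∉ w) : w = replicate w.length none := by
  have hu : some true ∉ w := by
    rw [← count_eq_zero, ← h.1, count_eq_zero]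
    exact hd
  refine eq_replicate_iff.mpr ⟨rfl, fun x hx => ?_⟩
  rcases x with _ | _ | _ <;> simp_all

end Motzkin

section Ballot

open List Set

def motzkinWords : Set (List (Option Bool)) := {w | IsMotzkinWord w}

theorem motzkinGF_eq_lengthGF : motzkinGF = lengthGF ℚ motzkinWords := by
  ext n
  rw [motzkinGF, PowerSeries.coeff_mk, coeff_lengthGF, motzkin]
  congr 2
  ext w
  exact and_comm

def ballotWords (l : ℕ) : Set (List (Option Bool)) :=
  {w | IsMotzkinWord w ∧ w.idxOf (some false) = l}

theorem motzkinBallot_succ_eq_ncard (n l : ℕ) :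
    motzkinBallot n (l + 1) = {w ∈ ballotWords l | w.length = n}.ncard := by
  simp only [motzkinBallot, Nat.add_sub_cancel, Nat.add_right_cancel_iff]
  split_ifs with hnl
  · subst hnl
    have : {w ∈ ballotWords n | w.length = n} = {replicate n none} := by
      ext w
      constructor
      · rintro ⟨⟨hw, hidx⟩, rfl⟩
        exact hw.eq_replicate_none (idxOf_eq_length_iff.mp hidx)
      · rintro rfl
        exact ⟨⟨isMotzkinWord_replicate_none n, by simp⟩, length_replicate⟩
    rw [this, ncard_singleton]
  · congr 1
    ext w
    constructor
    · rintro ⟨rfl, hw, hd, hnd⟩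
      exact ⟨⟨hw, (idxOf_eq_iff_getD (d := none) (by simp) (Ne.symm hnl)).mpr ⟨hd, hnd⟩⟩, rfl⟩
    · rintro ⟨⟨hw, hidx⟩, rfl⟩
      obtain ⟨hd, hnd⟩ := (idxOf_eq_iff_getD (d := none) (by simp) (Ne.symm hnl)).mp hidx
      exact ⟨rfl, hw, hd, hnd⟩

theorem ballotWords_zero : ballotWords 0 = {[]} := by
  ext w
  rcases w with _ | ⟨x, v⟩
  · simpa [ballotWords] using isMotzkinWord_nil
  · simp only [ballotWords, mem_ofPred_eq, mem_singleton_iff, reduceCtorEq, iff_false, not_and]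
    intro hw hidx
    obtain rfl : x = some false := by
      by_contra hx
      simp [idxOf_cons, beq_eq_false_iff_ne.mpr hx] at hidx
    exact not_isMotzkinWord_cons_down v hw

theorem ballotWords_succ (l : ℕ) :
    ballotWords (l + 1) = (none :: ·) '' ballotWords l ∪
      image2 (· ++ ·) ((some true :: ·) '' ballotWords l) ((some false :: ·) '' motzkinWords) := by
  ext w
  rcases w with _ | ⟨_ | _ | _, v⟩
  · simp [ballotWords]
  · simp [ballotWords, isMotzkinWord_cons_none_iff]
  · simp [ballotWords, not_isMotzkinWord_cons_down]
  · constructor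
    · rintro ⟨hw, hidx⟩
      obtain ⟨A, B, hA, hB, rfl⟩ := hw.exists_of_cons_up
      refine Or.inr ⟨some true :: A, ⟨A, ⟨hA, ?_⟩, rfl⟩, some false :: B, ⟨B, hB, rfl⟩, rfl⟩
      simpa [idxOf_cons, idxOf_append_cons_self] using hidx
    · rintro (⟨v', -, h⟩ | ⟨_, ⟨A, ⟨hA, hidx⟩, rfl⟩, _, ⟨B, hB, rfl⟩, h⟩)
      · simp at h
      · simp only [cons_append, cons.injEq, true_and] at h
        subst h
        exact ⟨hA.up_append_down hB, by simp [idxOf_append_cons_self, hidx]⟩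

theorem injOn_append_up_down {S T : Set (List (Option Bool))} (hS : ∀ A ∈ S, IsMotzkinWord A) :
    InjOn (fun p : List (Option Bool) × List (Option Bool) => p.1 ++ p.2)
      (((some true :: ·) '' S) ×ˢ ((some false :: ·) '' T)) := by
  rintro ⟨_, _⟩ ⟨⟨A, hA, rfl⟩, B, -, rfl⟩ ⟨_, _⟩ ⟨⟨A', hA', rfl⟩, B', -, rfl⟩ h
  obtain ⟨rfl, rfl⟩ := (hS A hA).append_down_inj (hS A' hA') (cons_injective h)
  rfl

theorem disjoint_image_cons_none_image2_cons_up (S S' T : Set (List (Option Bool))) :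
    Disjoint ((none :: ·) '' S) (image2 (· ++ ·) ((some true :: ·) '' S') T) := by
  rw [Set.disjoint_left]
  rintro _ ⟨v, -, rfl⟩ ⟨_, ⟨A, -, rfl⟩, B, -, h⟩
  simp at h

end Ballot

section BallotGF

open PowerSeries

variable {R : Type*} [CommSemiring R]

theorem lengthGF_ballotWords_succ (l : ℕ) :
    lengthGF R (ballotWords (l + 1)) =
      X * (1 + X * lengthGF R motzkinWords) * lengthGF R (ballotWords l) := by
  rw [ballotWords_succ, lengthGF_union (disjoint_image_cons_none_image2_cons_up _ _ _),
    lengthGF_image2_append (injOn_append_up_down fun _ hA => hA.1), lengthGF_image_cons,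
    lengthGF_image_cons, lengthGF_image_cons]
  ring

theorem lengthGF_ballotWords (l : ℕ) :
    lengthGF R (ballotWords l) = (X * (1 + X * lengthGF R motzkinWords)) ^ l := by
  induction l with
  | zero => rw [ballotWords_zero, lengthGF_singleton_nil, pow_zero]
  | succ l ih => rw [lengthGF_ballotWords_succ, ih, pow_succ']

end BallotGF

open PowerSeries in
/-- **Lemma (generating function of the Motzkin ballot numbers).** For fixed `k ≥ 1`,
`Σ_{n ≥ k-1} T_{n,k} xⁿ = (1 + x·m(x))^{k-1}·x^{k-1}` (note `T_{n,k} = 0` for `n < k-1`). -/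
theorem motzkinBallot_gf (k : ℕ) (hk : 1 ≤ k) :
    PowerSeries.mk (fun n => (motzkinBallot n k : ℚ)) =
      (1 + X * motzkinGF) ^ (k - 1) * X ^ (k - 1) := by
  obtain ⟨l, rfl⟩ := Nat.exists_eq_add_of_le' hk
  have hB : PowerSeries.mk (fun n => (motzkinBallot n (l + 1) : ℚ)) =
      lengthGF ℚ (ballotWords l) := by
    ext n
    rw [coeff_mk, coeff_lengthGF, motzkinBallot_succ_eq_ncard]
  rw [hB, lengthGF_ballotWords, motzkinGF_eq_lengthGF, Nat.add_sub_cancel, mul_pow, mul_comm]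
end

section
/- Let p ≥ 3 be a prime number and n ≥ 1. Then D_n^p is the disjoint union of D_n^{1,p-1} and D_n^{p-1,1}, and these two sets have the same cardinality, so |D_n^p| = 2·|D_n^{1,p-1}|. -/
/-!
Every factor `C(rᵢ + sᵢ, rᵢ)` of `L(D)` is a positive integer, so `L(D) = p` forces one factor
to be `p` and all others to be `1`. A factor is `1` iff `rᵢ = 0` or `sᵢ = 0`, and
`C(r + s, r) = p` with `r, s ≥ 1` forces `{r, s} = {1, p - 1}`: `p ∣ (r + s)!` gives
`p ≤ r + s`, whereas `C(r + s, r) > r + s` once `r, s ≥ 2`. The two resulting pieces are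
disjoint since `1 ≠ p - 1`, and they are exchanged by the mirror involution (reverse the word
and swap `u` and `d`), which sends `(rᵢ, sᵢ)` to `(s_{n-i}, r_{n-i})`.
-/

namespace Nat

theorem self_le_choose {n k : ℕ} (hk : 0 < k) (hkn : k < n) : n ≤ n.choose k := by
  induction n generalizing k with
  | zero => omega
  | succ n ih =>
    obtain ⟨k, rfl⟩ := Nat.exists_eq_add_one_of_ne_zero hk.ne'
    rcases k.eq_zero_or_pos with rfl | hk
    · simp
    · rw [choose_succ_succ']
      have := choose_pos (n := n) (k := k + 1) (by omega)
      have := ih hk (by omega)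
      omega

theorem add_lt_add_choose {r s : ℕ} (hr : 2 ≤ r) (hs : 2 ≤ s) : r + s < (r + s).choose r := by
  obtain ⟨r, rfl⟩ := Nat.exists_eq_add_one_of_ne_zero (by omega : r ≠ 0)
  rw [show r + 1 + s = r + s + 1 by omega, choose_succ_succ']
  have := self_le_choose (n := r + s) (k := r) (by omega) (by omega)
  have := self_le_choose (n := r + s) (k := r + 1) (by omega) (by omega)
  omega

theorem add_choose_eq_one_iff {r s : ℕ} : (r + s).choose r = 1 ↔ r = 0 ∨ s = 0 := by
  rw [choose_eq_one_iff]
  omega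

theorem add_choose_eq_prime_iff {p r s : ℕ} (hp : p.Prime) :
    (r + s).choose r = p ↔ (r = 1 ∧ s = p - 1) ∨ (r = p - 1 ∧ s = 1) := by
  constructor
  · intro h
    have hp_le : p ≤ r + s := by
      refine hp.dvd_factorial.1 ⟨r.factorial * s.factorial, ?_⟩
      rw [← add_choose_mul_factorial_mul_factorial r s, ← choose_symm_add, h, mul_assoc]
    have hrs : ¬(r = 0 ∨ s = 0) := fun h0 => hp.one_lt.ne' (h ▸ add_choose_eq_one_iff.2 h0)
    rcases (by omega : r = 1 ∨ s = 1 ∨ (2 ≤ r ∧ 2 ≤ s)) with rfl | rfl | ⟨hr2, hs2⟩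
    · rw [choose_one_right] at h; omega
    · rw [choose_symm_add, choose_one_right] at h; omega
    · have := add_lt_add_choose hr2 hs2; omega
  · have := hp.one_lt
    rintro (⟨rfl, rfl⟩ | ⟨rfl, rfl⟩)
    · rw [choose_one_right]; omega
    · rw [choose_succ_self_right]; omega

end Nat

theorem Finset.prod_eq_prime_iff {ι : Type*} {s : Finset ι} {f : ι → ℕ} {p : ℕ}
    (hp : p.Prime) :
    ∏ i ∈ s, f i = p ↔ ∃ i ∈ s, f i = p ∧ ∀ j ∈ s, j ≠ i → f j = 1 := by
  classical
  constructor
  · intro h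
    obtain ⟨i, hi, hpi⟩ := (Prime.dvd_finsetProd_iff hp.prime f).1 h.symm.dvd
    have hfi : f i = p := (hp.eq_one_or_self_of_dvd _ (h ▸ dvd_prod_of_mem f hi)).resolve_left
      fun h1 => hp.one_lt.ne' (Nat.dvd_one.1 (h1 ▸ hpi))
    have hrest : ∏ j ∈ s.erase i, f j = 1 := by
      rw [← mul_prod_erase s f hi, hfi] at h
      exact (Nat.mul_eq_left hp.ne_zero).1 h
    exact ⟨i, hi, hfi, fun j hj hji =>
      Nat.dvd_one.1 (hrest ▸ dvd_prod_of_mem f (mem_erase.2 ⟨hji, hj⟩))⟩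
  · rintro ⟨i, hi, hfi, hrest⟩
    rw [prod_eq_single_of_mem i hi hrest, hfi]

theorem Finset.prod_add_choose_eq_prime_iff {ι : Type*} {S : Finset ι} {r s : ι → ℕ} {p : ℕ}
    (hp : p.Prime) :
    ∏ i ∈ S, (r i + s i).choose (r i) = p ↔
      ∃ i ∈ S, ((r i = 1 ∧ s i = p - 1) ∨ (r i = p - 1 ∧ s i = 1)) ∧
        ∀ j ∈ S, 0 < r j ∧ 0 < s j → j = i := by
  simp only [prod_eq_prime_iff hp, Nat.add_choose_eq_prime_iff hp, Nat.add_choose_eq_one_iff]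
  have := hp.two_le
  refine exists_congr fun i => and_congr_right fun _ => and_congr_right fun hi =>
    forall₂_congr fun j _ => ?_
  constructor
  · intro h hj; by_contra hji; have := h hji; omega
  · intro h hji; by_contra hj; exact hji (h (by omega))

theorem dyckL_prime_eq_union (n : ℕ) {p : ℕ} (hp : p.Prime) :
    dyckL n p = dyckRS n 1 (p - 1) ∪ dyckRS n (p - 1) 1 := by
  have := hp.two_le
  ext w
  simp only [dyckL, dyckRS, LStat, Set.mem_union, Set.mem_ofPred_eq,
    Finset.prod_add_choose_eq_prime_iff hp]
  constructor
  · rintro ⟨hw, i, hi, (⟨hr, hs⟩ | ⟨hr, hs⟩), huniq⟩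
    · exact .inl ⟨hw, i, hi, by omega, hr, hs, huniq⟩
    · exact .inr ⟨hw, i, hi, by omega, hr, hs, huniq⟩
  · rintro (⟨hw, i, hi, -, hr, hs, huniq⟩ | ⟨hw, i, hi, -, hr, hs, huniq⟩)
    · exact ⟨hw, i, hi, .inl ⟨hr, hs⟩, huniq⟩
    · exact ⟨hw, i, hi, .inr ⟨hr, hs⟩, huniq⟩

theorem disjoint_dyckRS (n : ℕ) {r s r' s' : ℕ} (hr : r ≠ r') :
    Disjoint (dyckRS n r s) (dyckRS n r' s') := by
  rw [Set.disjoint_left]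
  rintro w ⟨-, i, -, -, hri, -, huniq⟩ ⟨-, i', hi', hpos', hri', -, -⟩
  obtain rfl := huniq i' hi' hpos'
  exact hr (hri ▸ hri')

theorem dyckRS_finite (n r s : ℕ) : (dyckRS n r s).Finite :=
  (List.finite_length_eq Bool (2 * n)).subset fun _ hw => hw.1.1

namespace List

variable {α : Type*}

theorem findIdxs_reverse (p : α → Bool) (l : List α) :
    l.reverse.findIdxs p = ((l.findIdxs p).map (l.length - 1 - ·)).reverse := by
  induction l with
  | nil => rfl
  | cons a l ih =>
    rw [reverse_cons, findIdxs_append, ih, findIdxs_singleton, findIdxs_cons,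
      findIdxs_start (s := 1)]
    cases p a <;> simp [Nat.sub_sub, Nat.add_comm 1]

theorem getD_findIdxs_lt_getD_findIdxs {p : α → Bool} {l : List α} {j k : ℕ} (hjk : j < k)
    (hk : k < l.countP p) : (l.findIdxs p).getD j 0 < (l.findIdxs p).getD k 0 := by
  rw [getD_eq_getElem _ _ (by simp; omega), getD_eq_getElem _ _ (by simpa)]
  exact pairwise_iff_getElem.1 pairwise_findIdxs _ _ _ _ hjk

theorem getD_findIdxs_lt_length {p : α → Bool} {l : List α} {k : ℕ} (hk : k < l.countP p) :
    (l.findIdxs p).getD k 0 < l.length := by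
  rw [getD_eq_getElem _ _ (by simpa)]
  exact (getElem_findIdxs_lt (s := 0) _).trans_eq l.length.add_zero

theorem getD_findIdxs_reverse {p : α → Bool} {l : List α} {k : ℕ} (hk : k < l.countP p) :
    (l.reverse.findIdxs p).getD k 0 =
      l.length - 1 - (l.findIdxs p).getD (l.countP p - 1 - k) 0 := by
  rw [findIdxs_reverse, getD_eq_getElem _ _ (by simpa), getElem_reverse, getElem_map,
    getD_eq_getElem _ _ (by simp; omega)]
  simp

theorem drop_take_reverse (l : List α) {j k : ℕ} (hjk : j ≤ k) (hk : k ≤ l.length) :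
    (l.reverse.take (l.length - j)).drop (l.length - k) = ((l.take k).drop j).reverse := by
  rw [take_reverse, Nat.sub_sub_self (by omega : j ≤ l.length), drop_reverse, drop_take,
    length_drop]
  congr 2
  omega

end List

def gap (c : Bool) (w : List Bool) (i : ℕ) : ℕ :=
  ((w.take ((w.findIdxs (· == c)).getD i 0)).drop
    ((w.findIdxs (· == c)).getD (i - 1) 0 + 1)).count (!c)

theorem rStat_eq_gap (w : List Bool) (i : ℕ) : rStat w i = gap true w i := rfl

theorem sStat_eq_gap (w : List Bool) (i : ℕ) : sStat w i = gap false w i := rfl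

theorem gap_map_not (c : Bool) (w : List Bool) (i : ℕ) :
    gap c (w.map not) i = gap (!c) w i := by
  have hidx : (w.map not).findIdxs (· == c) = w.findIdxs (· == !c) := by
    rw [List.findIdxs_map]
    congr 1
    funext b
    cases b <;> cases c <;> rfl
  rw [gap, gap, hidx, ← List.map_take, ← List.map_drop, Bool.not_not]
  exact List.count_map_of_injective _ _ Bool.not_injective c

theorem gap_reverse (c : Bool) {w : List Bool} {i : ℕ} (hi : 1 ≤ i) (him : i < w.count c) :
    gap c w.reverse i = gap c w (w.count c - i) := by
  rw [List.count_eq_countP] at him ⊢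
  set m := w.countP (· == c)
  have hlt := List.getD_findIdxs_lt_getD_findIdxs (p := (· == c)) (l := w)
    (show m - 1 - i < m - i by omega) (by omega)
  have hlen := List.getD_findIdxs_lt_length (p := (· == c)) (l := w) (show m - i < m by omega)
  rw [gap, gap, List.getD_findIdxs_reverse (by omega), List.getD_findIdxs_reverse him,
    show m - i - 1 = m - 1 - i by omega, show m - 1 - (i - 1) = m - i by omega]
  generalize (w.findIdxs (· == c)).getD (m - 1 - i) 0 = a at *
  generalize (w.findIdxs (· == c)).getD (m - i) 0 = b at *
  rw [show w.length - 1 - a = w.length - (a + 1) by omega,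
    show w.length - 1 - b + 1 = w.length - b by omega,
    List.drop_take_reverse _ hlt hlen.le, List.count_reverse]

def mirror (w : List Bool) : List Bool := (w.map not).reverse

theorem mirror_involutive : Function.Involutive mirror := fun w => by
  simp [mirror, ← List.map_reverse, Function.comp_def]

theorem length_mirror (w : List Bool) : (mirror w).length = w.length := by
  simp [mirror]

theorem count_map_not (c : Bool) (w : List Bool) : (w.map not).count c = w.count (!c) := by
  simpa using List.count_map_of_injective w not Bool.not_injective (!c)

theorem count_mirror (c : Bool) (w : List Bool) : (mirror w).count c = w.count (!c) := by
  rw [mirror, List.count_reverse, count_map_not]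

theorem take_mirror (w : List Bool) (k : ℕ) :
    (mirror w).take k = mirror (w.drop (w.length - k)) := by
  rw [mirror, List.take_reverse, List.length_map, ← List.map_drop, mirror]

theorem gap_mirror (c : Bool) {w : List Bool} {i : ℕ} (hi : 1 ≤ i) (him : i < w.count (!c)) :
    gap c (mirror w) i = gap (!c) w (w.count (!c) - i) := by
  rw [mirror, gap_reverse c hi (by rwa [count_map_not]), gap_map_not, count_map_not]

theorem rStat_mirror {n : ℕ} {w : List Bool} (hw : w.count false = n) {i : ℕ} (hi : 1 ≤ i)
    (hin : i < n) : rStat (mirror w) i = sStat w (n - i) := by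
  subst hw
  rw [rStat_eq_gap, sStat_eq_gap]
  exact gap_mirror true hi hin

theorem sStat_mirror {n : ℕ} {w : List Bool} (hw : w.count true = n) {i : ℕ} (hi : 1 ≤ i)
    (hin : i < n) : sStat (mirror w) i = rStat w (n - i) := by
  subst hw
  rw [rStat_eq_gap, sStat_eq_gap]
  exact gap_mirror false hi hin

theorem isDyckWord_mirror {n : ℕ} {w : List Bool} (hw : IsDyckWord n w) :
    IsDyckWord n (mirror w) := by
  obtain ⟨hlen, htrue, hfalse, hprefix⟩ := hw
  refine ⟨by rw [length_mirror, hlen], by rw [count_mirror]; exact hfalse,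
    by rw [count_mirror]; exact htrue, fun q hq => ?_⟩
  rw [List.prefix_iff_eq_take.1 hq, take_mirror, count_mirror, count_mirror]
  -- a prefix of the mirror is the mirror of a suffix, whose excess of `d`s over `u`s is
  -- that of the complementary prefix
  set m := w.length - q.length
  have hsplit (c : Bool) : (w.take m).count c + (w.drop m).count c = w.count c := by
    rw [← List.count_append, List.take_append_drop]
  have := hsplit true
  have := hsplit false
  have := hprefix _ (List.take_prefix m w)
  simp only [Bool.not_false, Bool.not_true]
  omega

theorem mirror_mem_dyckRS {n r s : ℕ} {w : List Bool} (hw : w ∈ dyckRS n r s) :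
    mirror w ∈ dyckRS n s r := by
  obtain ⟨hD, i, hi, ⟨hr_pos, hs_pos⟩, hr, hs, huniq⟩ := hw
  rw [Finset.mem_Icc] at hi
  have hrev {j : ℕ} (hj : j ∈ Finset.Icc 1 (n - 1)) :
      rStat (mirror w) j = sStat w (n - j) ∧ sStat (mirror w) j = rStat w (n - j) := by
    rw [Finset.mem_Icc] at hj
    exact ⟨rStat_mirror hD.2.2.1 hj.1 (by omega), sStat_mirror hD.2.1 hj.1 (by omega)⟩
  have hni : n - i ∈ Finset.Icc 1 (n - 1) := Finset.mem_Icc.2 ⟨by omega, by omega⟩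
  rw [← Nat.sub_sub_self (show i ≤ n by omega)] at hr_pos hs_pos hr hs
  refine ⟨isDyckWord_mirror hD, n - i, hni, ?_⟩
  rw [(hrev hni).1, (hrev hni).2]
  refine ⟨⟨hs_pos, hr_pos⟩, hs, hr, fun j hj hpos => ?_⟩
  rw [(hrev hj).1, (hrev hj).2] at hpos
  have := huniq (n - j) (by rw [Finset.mem_Icc] at hj ⊢; omega) ⟨hpos.2, hpos.1⟩
  rw [Finset.mem_Icc] at hj
  omega

theorem ncard_dyckRS_le_swap (n r s : ℕ) : (dyckRS n r s).ncard ≤ (dyckRS n s r).ncard :=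
  Set.ncard_le_ncard_of_injOn mirror (fun _ => mirror_mem_dyckRS)
    mirror_involutive.injective.injOn (dyckRS_finite n s r)

theorem ncard_dyckRS_swap (n r s : ℕ) : (dyckRS n r s).ncard = (dyckRS n s r).ncard :=
  (ncard_dyckRS_le_swap n r s).antisymm (ncard_dyckRS_le_swap n s r)

theorem dyck_L_prime_decomp_general (p : ℕ) (hp : p.Prime) (hp3 : 3 ≤ p) (n : ℕ) :
    dyckL n p = dyckRS n 1 (p - 1) ∪ dyckRS n (p - 1) 1 ∧
    Disjoint (dyckRS n 1 (p - 1)) (dyckRS n (p - 1) 1) ∧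
    (dyckRS n 1 (p - 1)).ncard = (dyckRS n (p - 1) 1).ncard ∧
    (dyckL n p).ncard = 2 * (dyckRS n 1 (p - 1)).ncard := by
  have hunion := dyckL_prime_eq_union n hp
  have hdisj : Disjoint (dyckRS n 1 (p - 1)) (dyckRS n (p - 1) 1) :=
    disjoint_dyckRS n (by omega)
  have hcard := ncard_dyckRS_swap n 1 (p - 1)
  refine ⟨hunion, hdisj, hcard, ?_⟩
  rw [hunion, Set.ncard_union_eq hdisj (dyckRS_finite _ _ _) (dyckRS_finite _ _ _), ← hcard,
    two_mul]

/-- For a prime `p ≥ 3` and `n ≥ 1`, `𝒟ₙᵖ` is the disjoint union of `𝒟ₙ^{1,p-1}` and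
`𝒟ₙ^{p-1,1}`, these two sets are equinumerous, and `|𝒟ₙᵖ| = 2·|𝒟ₙ^{1,p-1}|`. -/
theorem dyck_L_prime_decomp (p : ℕ) (hp : p.Prime) (hp3 : 3 ≤ p) (n : ℕ) (hn : 1 ≤ n) :
    dyckL n p = dyckRS n 1 (p - 1) ∪ dyckRS n (p - 1) 1 ∧
    Disjoint (dyckRS n 1 (p - 1)) (dyckRS n (p - 1) 1) ∧
    (dyckRS n 1 (p - 1)).ncard = (dyckRS n (p - 1) 1).ncard ∧
    (dyckL n p).ncard = 2 * (dyckRS n 1 (p - 1)).ncard :=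
  dyck_L_prime_decomp_general p hp hp3 n
end
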